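/- Let Z be a real m×n matrix and let r ≥ rank(Z). Then the nuclear norm of Z equals the minimum of (1/2)(‖A‖_F² + ‖B‖_F²) over all factorizations Z = ABᵀ with A an m×r real matrix and B an n×r real matrix; that is, ‖Z‖_* = min_{A,B : Z = ABᵀ} (1/2)(‖A‖_F² + ‖B‖_F²). In particular, for every such factorization ‖ABᵀ‖_* ≤ (1/2)(‖A‖_F² + ‖B‖_F²), and equality holds when A = UD^{1/2} and B = VD^{1/2} where UDVᵀ is a singular value decomposition of Z. -/

import Mathlib

noncomputable section

open Matrix

/-- Squared Frobenius norm of a real matrix. -/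
def frobSq {m n : ℕ} (M : Matrix (Fin m) (Fin n) ℝ) : ℝ := ∑ i, ∑ j, (M i j) ^ 2

/-- Nuclear norm: sum of the singular values, i.e. of the square roots of the
eigenvalues of `Zᴴ * Z`. -/
def nuclearNorm {m n : ℕ} (Z : Matrix (Fin m) (Fin n) ℝ) : ℝ :=
  ∑ i, Real.sqrt ((Matrix.isHermitian_conjTranspose_mul_self Z).eigenvalues i)

/-- `U * diagonal σ * Vᵀ` is a (thin) singular value decomposition of `X`, with the
singular values `σ` listed in decreasing order. -/
def IsThinSVD {m n p : ℕ} (X : Matrix (Fin m) (Fin n) ℝ) (U : Matrix (Fin m) (Fin p) ℝ)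
    (σ : Fin p → ℝ) (V : Matrix (Fin n) (Fin p) ℝ) : Prop :=
  X = U * Matrix.diagonal σ * Vᵀ ∧ Uᵀ * U = 1 ∧ Vᵀ * V = 1 ∧
    (∀ i, 0 ≤ σ i) ∧ Antitone σ

/-! For partial isometries `P`, `R` and any factorization `Z = A Bᵀ`,
`tr (Pᵀ Z R) = tr ((Pᵀ A) (Rᵀ B)ᵀ) ≤ ½ (‖Pᵀ A‖² + ‖Rᵀ B‖²) ≤ ½ (‖A‖² + ‖B‖²)`.
If `Z = P diag(s) Rᵀ` is an SVD-like decomposition, the left-hand side is `∑ s`, and it is attained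
by `A = P diag(√s)`, `B = R diag(√s)`. The given SVD is such a decomposition, and so is the one
built from an eigendecomposition `Zᵀ Z = W diag(λ) Wᵀ`, namely `P = Z W diag(λ^{-1/2})`, `R = W`,
`s = √λ`; comparing the two gives `∑ σ = ∑ √λ = ‖Z‖_*`. Finally at most `rank Z ≤ r` of the
`σ i` are nonzero, so the optimal factors can be cut down or padded to `r` columns. -/

section Frobenius

variable {m n p q : ℕ}

lemma frobSq_nonneg (M : Matrix (Fin m) (Fin n) ℝ) : 0 ≤ frobSq M := by
  unfold frobSq; positivity

lemma frobSq_eq_trace (M : Matrix (Fin m) (Fin n) ℝ) : frobSq M = (Mᵀ * M).trace := by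
  simp only [frobSq, trace, diag, mul_apply, transpose_apply, pow_two]
  exact Finset.sum_comm

lemma trace_mul_transpose_le (M N : Matrix (Fin m) (Fin n) ℝ) :
    (M * Nᵀ).trace ≤ 1 / 2 * (frobSq M + frobSq N) := by
  simp only [trace, diag, mul_apply, transpose_apply, frobSq, ← Finset.sum_add_distrib,
    Finset.mul_sum]
  refine Finset.sum_le_sum fun i _ => Finset.sum_le_sum fun j _ => ?_
  nlinarith [sq_nonneg (M i j - N i j)]

-- `‖A‖² = ‖Pᵀ A‖² + ‖Q A‖²` for the orthogonal projection `Q = 1 - P Pᵀ`.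
lemma frobSq_transpose_mul_le {P : Matrix (Fin m) (Fin p) ℝ} (hP : Pᵀ * P * Pᵀ = Pᵀ)
    (A : Matrix (Fin m) (Fin q) ℝ) : frobSq (Pᵀ * A) ≤ frobSq A := by
  set Q := 1 - P * Pᵀ
  have hQ : Qᵀ * Q = Q := by
    have hPP : P * Pᵀ * (P * Pᵀ) = P * Pᵀ := by
      rw [Matrix.mul_assoc, ← Matrix.mul_assoc Pᵀ, hP]
    simp only [Q, transpose_sub, transpose_one, transpose_mul, transpose_transpose,
      Matrix.sub_mul, Matrix.mul_sub, Matrix.one_mul, Matrix.mul_one, hPP]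
    abel
  have hsplit : frobSq A = frobSq (Pᵀ * A) + frobSq (Q * A) := by
    have hsum : P * Pᵀ + Qᵀ * Q = 1 := by rw [hQ]; exact add_sub_cancel _ _
    rw [frobSq_eq_trace, frobSq_eq_trace, frobSq_eq_trace, ← trace_add]
    calc (Aᵀ * A).trace = (Aᵀ * (P * Pᵀ + Qᵀ * Q) * A).trace := by rw [hsum, Matrix.mul_one]
      _ = _ := by simp only [transpose_mul, transpose_transpose, Matrix.mul_add, Matrix.add_mul,
          Matrix.mul_assoc]
  linarith [frobSq_nonneg (Q * A)]

lemma trace_transpose_mul_mul_le {P : Matrix (Fin m) (Fin p) ℝ} {R : Matrix (Fin n) (Fin p) ℝ}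
    (hP : Pᵀ * P * Pᵀ = Pᵀ) (hR : Rᵀ * R * Rᵀ = Rᵀ)
    {A : Matrix (Fin m) (Fin q) ℝ} {B : Matrix (Fin n) (Fin q) ℝ} :
    (Pᵀ * (A * Bᵀ) * R).trace ≤ 1 / 2 * (frobSq A + frobSq B) :=
  calc (Pᵀ * (A * Bᵀ) * R).trace = ((Pᵀ * A) * (Rᵀ * B)ᵀ).trace := by
        simp only [transpose_mul, transpose_transpose, Matrix.mul_assoc]
    _ ≤ 1 / 2 * (frobSq (Pᵀ * A) + frobSq (Rᵀ * B)) := trace_mul_transpose_le _ _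
    _ ≤ 1 / 2 * (frobSq A + frobSq B) := by
        gcongr
        exacts [frobSq_transpose_mul_le hP A, frobSq_transpose_mul_le hR B]

lemma frobSq_mul_diagonal_sqrt_mul {P : Matrix (Fin m) (Fin p) ℝ} {s : Fin p → ℝ}
    (hs : ∀ i, 0 ≤ s i) (hP : Pᵀ * P * diagonal s = diagonal s) {E : Matrix (Fin p) (Fin q) ℝ}
    (hE : diagonal (fun i => √(s i)) * (E * Eᵀ) = diagonal fun i => √(s i)) :
    frobSq (P * diagonal (fun i => √(s i)) * E) = ∑ i, s i := by
  set D := diagonal fun i => √(s i)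
  have hDD : D * D = diagonal s := by
    rw [diagonal_mul_diagonal]
    exact congrArg diagonal (funext fun i => Real.mul_self_sqrt (hs i))
  calc frobSq (P * D * E) = (Eᵀ * (D * (Pᵀ * (P * (D * E))))).trace := by
        simp only [frobSq_eq_trace, transpose_mul, D, diagonal_transpose, Matrix.mul_assoc]
    _ = (D * (Pᵀ * (P * (D * (E * Eᵀ))))).trace := by
        rw [trace_mul_comm]; simp only [Matrix.mul_assoc]
    _ = (Pᵀ * (P * (D * D))).trace := by
        rw [hE, trace_mul_comm]; simp only [Matrix.mul_assoc]
    _ = ∑ i, s i := by rw [hDD, ← Matrix.mul_assoc, hP, trace_diagonal]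

end Frobenius

lemma eq_zero_of_antitone_of_card_ne_zero_le {α : Type*} [PartialOrder α] [Zero α]
    [DecidableEq α] {p r : ℕ} {σ : Fin p → α} (hσ : Antitone σ) (hσ0 : ∀ i, 0 ≤ σ i)
    (hcard : Fintype.card {i // σ i ≠ 0} ≤ r) {j : Fin p} (hj : r ≤ j) : σ j = 0 := by
  by_contra hne
  have hsub : Finset.Iic j ⊆ ({i | σ i ≠ 0} : Finset (Fin p)) := fun i hi =>
    Finset.mem_filter.mpr ⟨Finset.mem_univ i,
      (((hσ0 j).lt_of_ne' hne).trans_le (hσ (Finset.mem_Iic.mp hi))).ne'⟩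
  have := Finset.card_le_card hsub
  rw [Fin.card_Iic, ← Fintype.card_subtype] at this
  omega

def rectOne (R : Type*) [Zero R] [One R] (p r : ℕ) : Matrix (Fin p) (Fin r) R :=
  of fun j k => if (j : ℕ) = k then 1 else 0

lemma diagonal_mul_rectOne_mul_transpose {R : Type*} [Semiring R] {p r : ℕ} {d : Fin p → R}
    (hd : ∀ j : Fin p, r ≤ j → d j = 0) :
    diagonal d * (rectOne R p r * (rectOne R p r)ᵀ) = diagonal d := by
  ext j j'
  rw [diagonal_mul]
  by_cases hj : (j : ℕ) < r
  · have hsum : (rectOne R p r * (rectOne R p r)ᵀ) j j' = if j = j' then 1 else 0 := by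
      rw [mul_apply, Finset.sum_eq_single ⟨j, hj⟩]
      · simp [rectOne, Fin.ext_iff, eq_comm]
      · intro k _ hk
        have : (j : ℕ) ≠ k := fun h => hk (Fin.ext h.symm)
        simp [rectOne, this]
      · simp
    simp [hsum, diagonal_apply]
  · simp [hd j (not_lt.mp hj), diagonal_apply]

/-- Like `IsThinSVD`, but `P` and `R` need only be partial isometries that are isometric on the
support of `s`, and `s` need not be sorted. -/
structure IsPartialSVD {m n p : ℕ} (Z : Matrix (Fin m) (Fin n) ℝ) (P : Matrix (Fin m) (Fin p) ℝ)
    (s : Fin p → ℝ) (R : Matrix (Fin n) (Fin p) ℝ) : Prop where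
  eq : Z = P * diagonal s * Rᵀ
  nonneg : ∀ i, 0 ≤ s i
  left_partialIsometry : Pᵀ * P * Pᵀ = Pᵀ
  right_partialIsometry : Rᵀ * R * Rᵀ = Rᵀ
  left_isometric : Pᵀ * P * diagonal s = diagonal s
  right_isometric : Rᵀ * R * diagonal s = diagonal s

namespace IsPartialSVD

variable {m n p q : ℕ} {Z : Matrix (Fin m) (Fin n) ℝ} {P : Matrix (Fin m) (Fin p) ℝ}
  {s : Fin p → ℝ} {R : Matrix (Fin n) (Fin p) ℝ}

lemma trace_transpose_mul_mul (h : IsPartialSVD Z P s R) : (Pᵀ * Z * R).trace = ∑ i, s i := by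
  have hR : diagonal s * (Rᵀ * R) = diagonal s := by
    simpa [transpose_mul, Matrix.mul_assoc] using congrArg transpose h.right_isometric
  rw [h.eq, show Pᵀ * (P * diagonal s * Rᵀ) * R = Pᵀ * P * diagonal s * (Rᵀ * R) by
    simp only [Matrix.mul_assoc], h.left_isometric, hR, trace_diagonal]

lemma sum_le (h : IsPartialSVD Z P s R) {A : Matrix (Fin m) (Fin q) ℝ}
    {B : Matrix (Fin n) (Fin q) ℝ} (hZ : Z = A * Bᵀ) : ∑ i, s i ≤ 1 / 2 * (frobSq A + frobSq B) :=
  h.trace_transpose_mul_mul ▸ hZ ▸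
    trace_transpose_mul_mul_le h.left_partialIsometry h.right_partialIsometry

lemma eq_mul_transpose (h : IsPartialSVD Z P s R) {E : Matrix (Fin p) (Fin q) ℝ}
    (hE : diagonal (fun i => √(s i)) * (E * Eᵀ) = diagonal fun i => √(s i)) :
    Z = (P * diagonal (fun i => √(s i)) * E) * (R * diagonal (fun i => √(s i)) * E)ᵀ := by
  calc Z = P * (diagonal (fun i => √(s i)) * diagonal fun i => √(s i)) * Rᵀ := by
        rw [diagonal_mul_diagonal, h.eq]
        exact congrArg (P * diagonal · * Rᵀ)
          (funext fun i => (Real.mul_self_sqrt (h.nonneg i)).symm)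
    _ = P * (diagonal (fun i => √(s i)) * (E * Eᵀ)) * diagonal (fun i => √(s i)) * Rᵀ := by
        rw [hE]; simp only [Matrix.mul_assoc]
    _ = _ := by simp only [transpose_mul, diagonal_transpose, Matrix.mul_assoc]

lemma half_frobSq_add_frobSq (h : IsPartialSVD Z P s R) {E : Matrix (Fin p) (Fin q) ℝ}
    (hE : diagonal (fun i => √(s i)) * (E * Eᵀ) = diagonal fun i => √(s i)) :
    1 / 2 * (frobSq (P * diagonal (fun i => √(s i)) * E) +
      frobSq (R * diagonal (fun i => √(s i)) * E)) = ∑ i, s i := by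
  rw [frobSq_mul_diagonal_sqrt_mul h.nonneg h.left_isometric hE,
    frobSq_mul_diagonal_sqrt_mul h.nonneg h.right_isometric hE]
  ring

lemma sum_le_sum {p' : ℕ} {P' : Matrix (Fin m) (Fin p') ℝ} {s' : Fin p' → ℝ}
    {R' : Matrix (Fin n) (Fin p') ℝ} (h : IsPartialSVD Z P s R) (h' : IsPartialSVD Z P' s' R') :
    ∑ i, s i ≤ ∑ i, s' i := by
  have hE : diagonal (fun i => √(s' i)) * (1 * 1ᵀ) = diagonal fun i => √(s' i) := by simp
  exact (h.sum_le (h'.eq_mul_transpose hE)).trans_eq (h'.half_frobSq_add_frobSq hE)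

end IsPartialSVD

-- Here `(√0)⁻¹ = 0`: the columns of `Z W` with `d i = 0` vanish, and so do those of `P`.
lemma isPartialSVD_of_transpose_mul_self_eq_diagonal {m n : ℕ} {Z : Matrix (Fin m) (Fin n) ℝ}
    {W : Matrix (Fin n) (Fin n) ℝ} {d : Fin n → ℝ} (hW : Wᵀ * W = 1) (hW' : W * Wᵀ = 1)
    (hd : (Z * W)ᵀ * (Z * W) = diagonal d) :
    IsPartialSVD Z (Z * W * diagonal fun i => (√(d i))⁻¹) (fun i => √(d i)) W := by
  set Y := Z * W
  have hd_eq (i : Fin n) : d i = ∑ k, Y k i * Y k i := by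
    simpa [mul_apply] using (congrFun (congrFun hd i) i).symm
  have hd_nonneg (i : Fin n) : 0 ≤ d i := hd_eq i ▸ Finset.sum_nonneg fun k _ => mul_self_nonneg _
  have hd_sq (i : Fin n) : d i = √(d i) * √(d i) := (Real.mul_self_sqrt (hd_nonneg i)).symm
  have hcol (i : Fin n) (hi : d i = 0) (k : Fin m) : Y k i = 0 :=
    mul_self_eq_zero.mp <| (Finset.sum_eq_zero_iff_of_nonneg fun k _ => mul_self_nonneg (Y k i)).mp
      (hd_eq i ▸ hi) k (Finset.mem_univ k)
  have hgram (c : Fin n → ℝ) :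
      (Y * diagonal c)ᵀ * (Y * diagonal c) = diagonal fun i => c i * d i * c i := by
    rw [transpose_mul, diagonal_transpose, Matrix.mul_assoc, ← Matrix.mul_assoc Yᵀ, hd,
      diagonal_mul_diagonal, diagonal_mul_diagonal]
    simp only [mul_assoc]
  refine ⟨?_, fun i => Real.sqrt_nonneg _, ?_, by rw [hW, Matrix.one_mul], ?_,
    by rw [hW, Matrix.one_mul]⟩
  · have hY : Y * diagonal (fun i => (√(d i))⁻¹) * diagonal (fun i => √(d i)) = Y := by
      ext k i
      simp only [mul_diagonal]
      by_cases hi : d i = 0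
      · simp [hcol i hi k]
      · rw [mul_assoc, inv_mul_cancel₀ (Real.sqrt_ne_zero'.mpr ((hd_nonneg i).lt_of_ne' hi)),
          mul_one]
    rw [hY, Matrix.mul_assoc, hW', Matrix.mul_one]
  · rw [hgram, transpose_mul, diagonal_transpose, ← Matrix.mul_assoc, diagonal_mul_diagonal]
    congr 2
    funext i
    nth_rw 2 [hd_sq i]
    simpa [← mul_assoc] using inv_mul_mul_self (√(d i))⁻¹
  · rw [hgram, diagonal_mul_diagonal]
    congr 1
    funext i
    nth_rw 2 [hd_sq i]
    simp [← mul_assoc]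

lemma exists_isPartialSVD_sqrt_eigenvalues {m n : ℕ} (Z : Matrix (Fin m) (Fin n) ℝ) :
    ∃ (P : Matrix (Fin m) (Fin n) ℝ) (R : Matrix (Fin n) (Fin n) ℝ), IsPartialSVD Z P
      (fun i => √((isHermitian_conjTranspose_mul_self Z).eigenvalues i)) R := by
  set hZ := isHermitian_conjTranspose_mul_self Z
  set W : Matrix (Fin n) (Fin n) ℝ := (hZ.eigenvectorUnitary : Matrix (Fin n) (Fin n) ℝ)
  have hW : Wᵀ * W = 1 := by
    have := Unitary.coe_star_mul_self hZ.eigenvectorUnitary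
    rwa [star_eq_conjTranspose, conjTranspose_eq_transpose_of_trivial] at this
  have hW' : W * Wᵀ = 1 := by
    have := Unitary.coe_mul_star_self hZ.eigenvectorUnitary
    rwa [Unitary.coe_star, star_eq_conjTranspose, conjTranspose_eq_transpose_of_trivial W] at this
  have hd : (Z * W)ᵀ * (Z * W) = diagonal hZ.eigenvalues := by
    have := hZ.conjStarAlgAut_star_eigenvectorUnitary
    rw [Unitary.conjStarAlgAut_star_apply, RCLike.ofReal_real_eq_id, Function.id_comp] at this
    rw [← this]
    simp only [transpose_mul, Matrix.mul_assoc, W, star_eq_conjTranspose,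
      conjTranspose_eq_transpose_of_trivial]
  exact ⟨_, _, isPartialSVD_of_transpose_mul_self_eq_diagonal hW hW' hd⟩

lemma nuclearNorm_eq_sum_of_isPartialSVD {m n p : ℕ} {Z : Matrix (Fin m) (Fin n) ℝ}
    {P : Matrix (Fin m) (Fin p) ℝ} {s : Fin p → ℝ} {R : Matrix (Fin n) (Fin p) ℝ}
    (h : IsPartialSVD Z P s R) : nuclearNorm Z = ∑ i, s i := by
  obtain ⟨P', R', h'⟩ := exists_isPartialSVD_sqrt_eigenvalues Z
  exact le_antisymm (h'.sum_le_sum h) (h.sum_le_sum h')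

lemma IsThinSVD.isPartialSVD {m n p : ℕ} {X : Matrix (Fin m) (Fin n) ℝ}
    {U : Matrix (Fin m) (Fin p) ℝ} {σ : Fin p → ℝ} {V : Matrix (Fin n) (Fin p) ℝ}
    (h : IsThinSVD X U σ V) : IsPartialSVD X U σ V := by
  obtain ⟨hX, hU, hV, hσ0, -⟩ := h
  exact ⟨hX, hσ0, by rw [hU, Matrix.one_mul], by rw [hV, Matrix.one_mul],
    by rw [hU, Matrix.one_mul], by rw [hV, Matrix.one_mul]⟩

lemma IsThinSVD.eq_zero_of_rank_le {m n p r : ℕ} {X : Matrix (Fin m) (Fin n) ℝ}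
    {U : Matrix (Fin m) (Fin p) ℝ} {σ : Fin p → ℝ} {V : Matrix (Fin n) (Fin p) ℝ}
    (h : IsThinSVD X U σ V) (hr : X.rank ≤ r) {j : Fin p} (hj : r ≤ j) : σ j = 0 := by
  obtain ⟨hX, hU, hV, hσ0, hσ⟩ := h
  have hdiag : Uᵀ * X * V = diagonal σ := by
    rw [hX]
    simp only [Matrix.mul_assoc, hV, Matrix.mul_one, ← Matrix.mul_assoc Uᵀ, hU, Matrix.one_mul]
  have hrank : (diagonal σ).rank ≤ X.rank :=
    hdiag ▸ (rank_mul_le_left _ _).trans (rank_mul_le_right _ _)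
  exact eq_zero_of_antitone_of_card_ne_zero_le hσ hσ0 (rank_diagonal σ ▸ hrank.trans hr) hj

theorem nuclearNorm_eq_min_factorization {m n r : ℕ} (Z : Matrix (Fin m) (Fin n) ℝ)
    (hr : Z.rank ≤ r)
    (U : Matrix (Fin m) (Fin (min m n)) ℝ) (σ : Fin (min m n) → ℝ)
    (V : Matrix (Fin n) (Fin (min m n)) ℝ) (hSVD : IsThinSVD Z U σ V) :
    -- ‖Z‖_* is the minimum of (1/2)(‖A‖_F² + ‖B‖_F²) over factorizations Z = ABᵀ
    IsLeast {c : ℝ | ∃ A : Matrix (Fin m) (Fin r) ℝ, ∃ B : Matrix (Fin n) (Fin r) ℝ,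
        Z = A * Bᵀ ∧ c = (1 / 2) * (frobSq A + frobSq B)} (nuclearNorm Z) ∧
    -- equality holds at A = U D^{1/2}, B = V D^{1/2} where U D Vᵀ is an SVD of Z
    (U * Matrix.diagonal fun i => Real.sqrt (σ i)) *
        (V * Matrix.diagonal fun i => Real.sqrt (σ i))ᵀ = Z ∧
    nuclearNorm Z = (1 / 2) * (frobSq (U * Matrix.diagonal fun i => Real.sqrt (σ i)) +
        frobSq (V * Matrix.diagonal fun i => Real.sqrt (σ i))) := by
  have hσ := hSVD.isPartialSVD
  have hnuc : nuclearNorm Z = ∑ i, σ i := nuclearNorm_eq_sum_of_isPartialSVD hσ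
  have hone : diagonal (fun i => √(σ i)) * (1 * 1ᵀ) = diagonal fun i => √(σ i) := by simp
  have htrunc : diagonal (fun i => √(σ i)) * (rectOne ℝ _ r * (rectOne ℝ _ r)ᵀ) =
      diagonal fun i => √(σ i) :=
    diagonal_mul_rectOne_mul_transpose fun j hj => by
      rw [hSVD.eq_zero_of_rank_le hr hj, Real.sqrt_zero]
  refine ⟨⟨⟨_, _, hσ.eq_mul_transpose htrunc, by rw [hnuc, hσ.half_frobSq_add_frobSq htrunc]⟩,
    ?_⟩, by simpa using (hσ.eq_mul_transpose hone).symm, ?_⟩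
  · rintro c ⟨A, B, hZ, rfl⟩
    exact hnuc ▸ hσ.sum_le hZ
  · simpa [hnuc] using (hσ.half_frobSq_add_frobSq hone).symm
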